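/- arXiv:0806.3728 — 2 statements merged into one kernel-verified Lean document; each statement's English description precedes it below -/
import Mathlib

section
/- With notation as in the Kähler cone setting, for ρ = K r^{−2n+2}(log r)^δ with δ > 0 and K < 0, one has (ω + dd^c ρ)^n = (1 − δ(n−1) K r^{−2n}(log r)^{δ−1} + o(r^{−2n}(log r)^{δ−1})) ω^n as r → ∞; in particular (ω + dd^c ρ)^n ≥ ω^n for r sufficiently large. -/
/-!
Write `L = log r` and `powLog c b r = r ^ c * L ^ b`, so that `ρ = K · powLog (2 - 2n) δ`.
Then `B - 1 = ρ'/r` and `A - 1 = (rρ')'/(2r)` are explicit combinations of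
`v = powLog (-2n) δ`, `u = powLog (-2n) (δ - 1)` and `powLog (-2n) (δ - 2)`, all `O(v)`.
Expanding, `A B^(n-1) = 1 + (A - 1) + (n - 1)(B - 1) + O(v²)` with `v² = o(u)`; since the
exponent of `r` in `ρ` is `2 - 2n`, the terms of order `v` cancel in `(A - 1) + (n - 1)(B - 1)`,
which leaves `-δ(n - 1)K u + o(u)`, positive for large `r` as `K < 0`.
-/

open Filter Real Topology Asymptotics Finset

noncomputable def powLog (c b r : ℝ) : ℝ := r ^ c * log r ^ b

section powLog

variable {c b c' b' r : ℝ}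

lemma powLog_pos (hr : 1 < r) : 0 < powLog c b r :=
  mul_pos (rpow_pos_of_pos (by linarith) _) (rpow_pos_of_pos (log_pos hr) _)

lemma powLog_add_one (hr : 0 < r) : powLog (c + 1) b r = r * powLog c b r := by
  rw [powLog, powLog, rpow_add_one hr.ne']
  ring

lemma powLog_mul_powLog (hr : 1 < r) :
    powLog c b r * powLog c' b' r = powLog (c + c') (b + b') r := by
  rw [powLog, powLog, powLog, rpow_add (by linarith), rpow_add (log_pos hr)]
  ring

lemma hasDerivAt_powLog (hr : 1 < r) :
    HasDerivAt (powLog c b) (c * powLog (c - 1) b r + b * powLog (c - 1) (b - 1) r) r := by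
  have hr0 : 0 < r := by linarith
  have hlog : log r ≠ 0 := (log_pos hr).ne'
  have h := (hasDerivAt_rpow_const (p := c) (Or.inl hr0.ne')).mul
    ((hasDerivAt_log hr0.ne').rpow_const (p := b) (Or.inl hlog))
  refine h.congr_deriv ?_
  simp only [powLog, rpow_sub_one hr0.ne', rpow_sub_one hlog]
  field_simp

lemma tendsto_powLog_atTop_zero (h : c < 0 ∨ c = 0 ∧ b < 0) :
    Tendsto (powLog c b) atTop (𝓝 0) := by
  rcases h with hc | ⟨rfl, hb⟩
  · have h := (tendsto_rpow_mul_exp_neg_mul_atTop_nhds_zero b (-c) (by linarith)).comp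
      tendsto_log_atTop
    refine h.congr' ?_
    filter_upwards [eventually_gt_atTop 0] with r hr
    rw [Function.comp_apply, powLog, rpow_def_of_pos hr]
    ring_nf
  · have h := (tendsto_rpow_neg_atTop (y := -b) (by linarith)).comp tendsto_log_atTop
    refine h.congr fun r => ?_
    simp [powLog]

lemma powLog_isLittleO_powLog (h : c < c' ∨ c = c' ∧ b < b') :
    powLog c b =o[atTop] powLog c' b' := by
  have hlim : Tendsto (powLog (c - c') (b - b')) atTop (𝓝 0) := by
    refine tendsto_powLog_atTop_zero ?_
    rcases h with h | ⟨h, h'⟩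
    · exact Or.inl (by linarith)
    · exact Or.inr ⟨by linarith, by linarith⟩
  have h := ((isLittleO_one_iff ℝ).2 hlim).mul_isBigO (isBigO_refl (powLog c' b') atTop)
  simp only [one_mul] at h
  refine h.congr' ?_ EventuallyEq.rfl
  filter_upwards [eventually_gt_atTop 1] with r hr
  rw [powLog_mul_powLog hr, sub_add_cancel, sub_add_cancel]

end powLog

lemma deriv_const_mul_powLog {f : ℝ → ℝ} {K c b r : ℝ}
    (hf : ∀ s, 1 < s → f s = K * powLog c b s) (hr : 1 < r) :
    deriv f r = K * (c * powLog (c - 1) b r + b * powLog (c - 1) (b - 1) r) := by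
  have hfr : f =ᶠ[𝓝 r] fun s => K * powLog c b s :=
    eventually_of_mem (Ioi_mem_nhds hr) hf
  rw [hfr.deriv_eq, ((hasDerivAt_powLog hr).const_mul K).deriv]

lemma radial_coefficients_of_eq_powLog {ρ : ℝ → ℝ} {K c b r : ℝ}
    (hρ : ∀ s, 1 < s → ρ s = K * powLog (c + 2) b s) (hr : 1 < r) :
    deriv ρ r / r = K * ((c + 2) * powLog c b r + b * powLog c (b - 1) r) ∧
    (deriv (deriv ρ) r * r + deriv ρ r) / (2 * r) = K / 2 * ((c + 2) ^ 2 * powLog c b r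
      + 2 * b * (c + 2) * powLog c (b - 1) r + b * (b - 1) * powLog c (b - 2) r) := by
  have hc : c + 2 - 1 = c + 1 := by ring
  have hd1 : ∀ s, 1 < s → deriv ρ s =
      K * (c + 2) * powLog (c + 1) b s + K * b * powLog (c + 1) (b - 1) s := by
    intro s hs
    rw [deriv_const_mul_powLog hρ hs, hc]
    ring
  have hd2 : deriv (deriv ρ) r =
      K * (c + 2) * ((c + 1) * powLog c b r + b * powLog c (b - 1) r)
      + K * b * ((c + 1) * powLog c (b - 1) r + (b - 1) * powLog c (b - 2) r) := by
    have hρ' : deriv ρ =ᶠ[𝓝 r] fun s =>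
        K * (c + 2) * powLog (c + 1) b s + K * b * powLog (c + 1) (b - 1) s :=
      eventually_of_mem (Ioi_mem_nhds hr) hd1
    rw [hρ'.deriv_eq, (((hasDerivAt_powLog hr).const_mul _).fun_add
      ((hasDerivAt_powLog hr).const_mul _)).deriv, add_sub_cancel_right,
      show b - 1 - 1 = b - 2 by ring]
  have hr0 : 0 < r := by linarith
  rw [hd1 r hr, hd2, powLog_add_one hr0, powLog_add_one hr0]
  constructor
  · field_simp
  · field_simp
    ring

lemma one_add_mul_one_add_pow_sub_isBigO_sq {α : Type*} {l : Filter α} {x y v : α → ℝ} (m : ℕ)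
    (hx : x =O[l] v) (hy : y =O[l] v) (hy0 : Tendsto y l (𝓝 0)) :
    (fun t => (1 + x t) * (1 + y t) ^ m - 1 - x t - m * y t) =O[l] fun t => v t ^ 2 := by
  set S : ℝ → ℝ := fun z => ∑ i ∈ range m, (1 + z) ^ i
  set T : ℝ → ℝ := fun z => ∑ i ∈ range m, ∑ j ∈ range i, (1 + z) ^ j
  have hS : ∀ z, (1 + z) ^ m = 1 + z * S z := fun z => by
    linear_combination -geom_sum_mul (1 + z) m
  have hST : ∀ z, S z = m + z * T z := fun z => by
    have hi : ∀ i ∈ range m, (1 + z) ^ i = 1 + z * ∑ j ∈ range i, (1 + z) ^ j := fun i _ => by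
      linear_combination -geom_sum_mul (1 + z) i
    simp only [S, T, mul_sum, sum_congr rfl hi, sum_add_distrib, sum_const, card_range,
      nsmul_eq_mul, mul_one]
  have hSb : (fun t => S (y t)) =O[l] fun _ => (1 : ℝ) :=
    (((by fun_prop : Continuous S).tendsto 0).comp hy0).isBigO_one ℝ
  have hTb : (fun t => T (y t)) =O[l] fun _ => (1 : ℝ) :=
    (((by fun_prop : Continuous T).tendsto 0).comp hy0).isBigO_one ℝ
  refine (((hx.mul hy).mul hSb).add ((hy.mul hy).mul hTb)).congr (fun t => ?_) fun t => by ring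
  rw [hS, hST]
  ring

lemma eventually_le_of_isLittleO_sub {α : Type*} {l : Filter α} {f g u : α → ℝ} {k : ℝ}
    (h : (fun t => f t - (g t - k * u t)) =o[l] u) (hk : k < 0) (hu : ∀ᶠ t in l, 0 ≤ u t) :
    ∀ᶠ t in l, g t ≤ f t := by
  filter_upwards [h.def (by linarith : 0 < -k / 2), hu] with t ht hut
  rw [Real.norm_eq_abs, Real.norm_eq_abs, abs_of_nonneg hut] at ht
  nlinarith [(abs_le.mp ht).1]

lemma mul_pow_sub_isLittleO_powLog {ρ A B : ℝ → ℝ} {K δ c : ℝ} (m : ℕ) (hc : c + 2 = -2 * m)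
    (hρ : ∀ s, 1 < s → ρ s = K * powLog (c + 2) δ s)
    (hA : ∀ r, 1 < r → A r = 1 + (deriv (deriv ρ) r * r + deriv ρ r) / (2 * r))
    (hB : ∀ r, 1 < r → B r = 1 + deriv ρ r / r) :
    (fun r => A r * B r ^ m - (1 - δ * m * K * powLog c (δ - 1) r)) =o[atTop]
      powLog c (δ - 1) := by
  have hc0 : c < 0 := by have := m.cast_nonneg (α := ℝ); linarith
  set v := powLog c δ
  set u := powLog c (δ - 1)
  set w := powLog c (δ - 2)
  set x : ℝ → ℝ := fun r => K / 2 * ((c + 2) ^ 2 * v r + 2 * δ * (c + 2) * u r + δ * (δ - 1) * w r)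
  set y : ℝ → ℝ := fun r => K * ((c + 2) * v r + δ * u r)
  have huv : u =o[atTop] v := powLog_isLittleO_powLog (Or.inr ⟨rfl, by linarith⟩)
  have hwv : w =o[atTop] v := powLog_isLittleO_powLog (Or.inr ⟨rfl, by linarith⟩)
  have hwu : w =o[atTop] u := powLog_isLittleO_powLog (Or.inr ⟨rfl, by linarith⟩)
  have hv2u : (fun r => v r ^ 2) =o[atTop] u := by
    refine (powLog_isLittleO_powLog (c := c + c) (b := δ + δ) (Or.inl (by linarith))).congr' ?_
      EventuallyEq.rfl
    filter_upwards [eventually_gt_atTop 1] with r hr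
    rw [sq, powLog_mul_powLog hr]
  have hx : x =O[atTop] v :=
    ((((isBigO_refl v _).const_mul_left _).add (huv.isBigO.const_mul_left _)).add
      (hwv.isBigO.const_mul_left _)).const_mul_left _
  have hy : y =O[atTop] v :=
    (((isBigO_refl v _).const_mul_left _).add (huv.isBigO.const_mul_left _)).const_mul_left _
  have hR := one_add_mul_one_add_pow_sub_isBigO_sq m hx hy
    (hy.trans_tendsto (tendsto_powLog_atTop_zero (Or.inl hc0)))
  refine ((hR.trans_isLittleO hv2u).add (hwu.const_mul_left (K * δ * (δ - 1) / 2))).congr' ?_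
    EventuallyEq.rfl
  filter_upwards [eventually_gt_atTop 1] with r hr
  obtain ⟨hB', hA'⟩ := radial_coefficients_of_eq_powLog hρ hr
  rw [hA r hr, hB r hr, hA', hB']
  -- the terms of order `v` cancel because `(c + 2) ^ 2 / 2 + m * (c + 2) = 0`
  simp only [x, y, hc]
  ring

theorem stmt3 (n : ℕ) (hn : 2 ≤ n) (K δ : ℝ) (hK : K < 0) (hδ : 0 < δ)
    (ρ A B : ℝ → ℝ)
    (hρ : ∀ r : ℝ, 0 < r → ρ r = K * r ^ ((2 : ℝ) - 2 * n) * Real.log r ^ δ)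
    (hA : ∀ r : ℝ, 0 < r → A r = 1 + (deriv (deriv ρ) r * r + deriv ρ r) / (2 * r))
    (hB : ∀ r : ℝ, 0 < r → B r = 1 + deriv ρ r / r) :
    (fun r : ℝ => A r * B r ^ (n - 1)
        - (1 - δ * ((n : ℝ) - 1) * K * r ^ (-(2 : ℝ) * n) * Real.log r ^ (δ - 1)))
      =o[atTop] (fun r : ℝ => r ^ (-(2 : ℝ) * n) * Real.log r ^ (δ - 1)) ∧
    ∀ᶠ r : ℝ in atTop, 1 ≤ A r * B r ^ (n - 1) := by
  have hm : ((n - 1 : ℕ) : ℝ) = n - 1 := by rw [Nat.cast_sub (by omega), Nat.cast_one]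
  have key := mul_pow_sub_isLittleO_powLog (c := -(2 : ℝ) * n) (δ := δ) (n - 1)
    (by rw [hm]; ring)
    (fun s hs => by rw [hρ s (by linarith), powLog, show -(2 : ℝ) * n + 2 = 2 - 2 * n by ring,
      mul_assoc])
    (fun r hr => hA r (by linarith)) (fun r hr => hB r (by linarith))
  rw [hm] at key
  refine ⟨key.congr_left fun r => by simp only [powLog]; ring, ?_⟩
  refine eventually_le_of_isLittleO_sub (g := fun _ => 1) key ?_ ?_
  · have : (1 : ℝ) < n := by exact_mod_cast hn
    exact mul_neg_of_pos_of_neg (by nlinarith) hK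
  · filter_upwards [eventually_gt_atTop 1] with r hr
    exact (powLog_pos hr).le
end

section
/- Every lattice polygon P ⊂ ℝ² admits a triangulation into lattice triangles each of which is basic (its vertices v_0, v_1, v_2 satisfy that v_1 − v_0, v_2 − v_0 is a ℤ-basis of ℤ²); equivalently, every maximal lattice triangulation of a lattice polygon in dimension 2 is basic. -/
/-!
Write `det3 p q r` for twice the signed area of the triangle `p q r`.

A nondegenerate lattice triangle with `|det3| ≥ 2` contains a lattice point `z` other than its
vertices: some `w ∈ ℤ²` is not an integer combination of the edge vectors `a, b`, reducing its
coordinates modulo `ℤ` gives a lattice point `α a + β b` with `α, β ∈ [0, 1)`, and this point or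
its reflection `a + b - (α a + β b)` lies in the triangle; so maximal triangles are basic.
Joining `z` to the vertices cuts the triangle into triangles whose `det3` are `mᵢ · det3`, where
the `mᵢ < 1` are the barycentric coordinates of `z`, so induction on `|det3|` triangulates every
lattice triangle into basic ones.

A lattice polygon is triangulated by induction on the number of points of `V`: a point lying in the
hull of the others is dropped; if `V` has three points it is a triangle; otherwise take the
lexicographically smallest point `v` and the points `a, b` of `V` at the extreme angles seen from
`v`. The line `a b` cuts `conv V` into the triangle `v a b` and `conv (V \ {v})`.
-/

open Set

namespace LatticeTriangulation

section Determinant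

variable {R : Type*} [CommRing R]

def cross (u w : R × R) : R := u.1 * w.2 - u.2 * w.1

def det3 (p q r : R × R) : R := cross (q - p) (r - p)

lemma det3_rotate (p q r : R × R) : det3 q r p = det3 p q r := by
  simp only [det3, cross, Prod.fst_sub, Prod.snd_sub]; ring

lemma det3_swap (p q r : R × R) : det3 p r q = -det3 p q r := by
  simp only [det3, cross, Prod.fst_sub, Prod.snd_sub]; ring

@[simp] lemma det3_self_left (p r : R × R) : det3 p p r = 0 := by simp [det3, cross]

@[simp] lemma det3_self_right (p q : R × R) : det3 p q q = 0 := by simp [det3, cross]; ring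

@[simp] lemma det3_self_mid (p q : R × R) : det3 p q p = 0 := by simp [det3, cross]

lemma cross_smul_eq (a b u : R × R) : cross a b • u = cross u b • a + cross a u • b := by
  ext <;> simp only [cross, Prod.smul_fst, Prod.smul_snd, Prod.fst_add, Prod.snd_add,
    smul_eq_mul] <;> ring

lemma det3_add_det3_add_det3 (p q r x : R × R) :
    det3 q r x + det3 r p x + det3 p q x = det3 p q r := by
  simp only [det3, cross, Prod.fst_sub, Prod.snd_sub]; ring

lemma det3_smul_eq (p q r x : R × R) :
    det3 p q r • x = det3 q r x • p + det3 r p x • q + det3 p q x • r := by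
  ext <;> simp only [det3, cross, Prod.fst_sub, Prod.snd_sub, Prod.smul_fst, Prod.smul_snd,
    Prod.fst_add, Prod.snd_add, smul_eq_mul] <;> ring

lemma det3_of_eq_combination {p q r x : R × R} {m0 m1 m2 : R} (hm : m0 + m1 + m2 = 1)
    (hx : x = m0 • p + m1 • q + m2 • r) :
    det3 q r x = m0 * det3 p q r ∧ det3 r p x = m1 * det3 p q r ∧
      det3 p q x = m2 * det3 p q r := by
  obtain rfl : m2 = 1 - m0 - m1 := by linear_combination hm
  subst hx
  refine ⟨?_, ?_, ?_⟩ <;>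
  · simp only [det3, cross, Prod.fst_sub, Prod.snd_sub, Prod.smul_fst, Prod.smul_snd,
      Prod.fst_add, Prod.snd_add, smul_eq_mul]
    ring

end Determinant

def emb (p : ℤ × ℤ) : ℝ × ℝ := ((p.1 : ℝ), (p.2 : ℝ))

lemma emb_injective : Function.Injective emb := fun p q h => by
  simp only [emb, Prod.mk.injEq, Int.cast_inj] at h
  exact Prod.ext h.1 h.2

@[simp] lemma emb_zero : emb 0 = 0 := by simp [emb]

@[simp] lemma emb_add (p q : ℤ × ℤ) : emb (p + q) = emb p + emb q := by ext <;> simp [emb]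

@[simp] lemma emb_sub (p q : ℤ × ℤ) : emb (p - q) = emb p - emb q := by ext <;> simp [emb]

@[simp] lemma emb_zsmul (n : ℤ) (p : ℤ × ℤ) : emb (n • p) = (n : ℝ) • emb p := by
  ext <;> simp [emb]

@[simp] lemma cross_emb (u w : ℤ × ℤ) : cross (emb u) (emb w) = cross u w := by
  simp [cross, emb]

@[simp] lemma det3_emb (p q r : ℤ × ℤ) : det3 (emb p) (emb q) (emb r) = det3 p q r := by
  simp only [det3, ← emb_sub, cross_emb]

section LatticePoint

lemma exists_ne_zsmul_add_zsmul_of_not_isUnit {a b : ℤ × ℤ} (h : ¬IsUnit (cross a b)) :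
    ∃ w : ℤ × ℤ, ∀ m n : ℤ, w ≠ m • a + n • b := by
  by_contra! hall
  obtain ⟨m1, n1, h1⟩ := hall (1, 0)
  obtain ⟨m2, n2, h2⟩ := hall (0, 1)
  simp only [Prod.ext_iff, Prod.fst_add, Prod.snd_add, Prod.smul_fst, Prod.smul_snd,
    smul_eq_mul] at h1 h2
  refine h (IsUnit.of_mul_eq_one (m1 * n2 - m2 * n1) ?_)
  unfold cross
  linear_combination (-(m2 * a.2) - n2 * b.2) * h1.1 + (m1 * a.2 + n1 * b.2) * h2.1 - h2.2

lemma exists_fract_combination {a b : ℤ × ℤ} (h0 : cross a b ≠ 0) (h1 : ¬IsUnit (cross a b)) :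
    ∃ p : ℤ × ℤ, ∃ α β : ℝ, 0 ≤ α ∧ α < 1 ∧ 0 ≤ β ∧ β < 1 ∧ 0 < α + β ∧
      emb p = α • emb a + β • emb b := by
  obtain ⟨w, hw⟩ := exists_ne_zsmul_add_zsmul_of_not_isUnit h1
  have hD : cross (emb a) (emb b) ≠ 0 := by rw [cross_emb]; exact_mod_cast h0
  obtain ⟨σ, τ, hwστ⟩ : ∃ σ τ : ℝ, emb w = σ • emb a + τ • emb b :=
    ⟨(cross (emb a) (emb b))⁻¹ * cross (emb w) (emb b),
      (cross (emb a) (emb b))⁻¹ * cross (emb a) (emb w), by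
        rw [mul_smul, mul_smul, ← smul_add, ← cross_smul_eq, inv_smul_smul₀ hD]⟩
  set p := w - ⌊σ⌋ • a - ⌊τ⌋ • b
  have hp : emb p = Int.fract σ • emb a + Int.fract τ • emb b := by
    simp only [p, emb_sub, emb_zsmul, hwστ, Int.fract]
    module
  refine ⟨p, _, _, Int.fract_nonneg σ, Int.fract_lt_one σ, Int.fract_nonneg τ,
    Int.fract_lt_one τ, ?_, hp⟩
  by_contra! hle
  have hα : Int.fract σ = 0 :=
    le_antisymm (by linarith [Int.fract_nonneg τ]) (Int.fract_nonneg σ)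
  have hβ : Int.fract τ = 0 :=
    le_antisymm (by linarith [Int.fract_nonneg σ]) (Int.fract_nonneg τ)
  have hp0 : p = 0 := emb_injective (by simp [hp, hα, hβ])
  exact hw ⌊σ⌋ ⌊τ⌋ (by rw [← sub_eq_zero, sub_add_eq_sub_sub]; exact hp0)

lemma exists_barycentric_lattice_point {a b c : ℤ × ℤ} (h0 : det3 a b c ≠ 0)
    (h1 : ¬IsUnit (det3 a b c)) :
    ∃ z : ℤ × ℤ, ∃ m0 m1 m2 : ℝ, 0 ≤ m0 ∧ m0 < 1 ∧ 0 ≤ m1 ∧ m1 < 1 ∧ 0 ≤ m2 ∧ m2 < 1 ∧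
      m0 + m1 + m2 = 1 ∧ emb z = m0 • emb a + m1 • emb b + m2 • emb c := by
  obtain ⟨p, α, β, hα0, hα1, hβ0, hβ1, hαβ, hp⟩ := exists_fract_combination h0 h1
  simp only [emb_sub] at hp
  rcases le_or_gt (α + β) 1 with h | h
  · refine ⟨a + p, 1 - α - β, α, β, by linarith, by linarith, hα0, hα1, hβ0, hβ1, by ring, ?_⟩
    rw [emb_add, hp]
    module
  · -- reflect through the centre of the parallelogram spanned by `b - a` and `c - a`
    refine ⟨b + c - a - p, α + β - 1, 1 - α, 1 - β, by linarith, by linarith, by linarith,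
      by linarith, by linarith, by linarith, by ring, ?_⟩
    rw [emb_sub, emb_sub, emb_add, hp]
    module

end LatticePoint

section ConvexCombination

variable {E : Type*} [AddCommGroup E] [Module ℝ E]

lemma mem_convexHull_triple_iff {p q r x : E} :
    x ∈ convexHull ℝ {p, q, r} ↔ ∃ m0 m1 m2 : ℝ, 0 ≤ m0 ∧ 0 ≤ m1 ∧ 0 ≤ m2 ∧
      m0 + m1 + m2 = 1 ∧ x = m0 • p + m1 • q + m2 • r := by
  constructor
  · rw [← convexJoin_singleton_segment, mem_convexJoin]
    rintro ⟨_, rfl, y, ⟨u, w, hu, hw, huw, rfl⟩, s, t, hs, ht, hst, rfl⟩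
    exact ⟨s, t * u, t * w, hs, mul_nonneg ht hu, mul_nonneg ht hw,
      by linear_combination t * huw + hst, by module⟩
  · rintro ⟨m0, m1, m2, h0, h1, h2, hm, rfl⟩
    have hmem : ∀ y ∈ ({p, q, r} : Set E), y ∈ convexHull ℝ {p, q, r} :=
      fun y hy => subset_convexHull ℝ _ hy
    have := (convex_convexHull ℝ {p, q, r}).sum_mem (t := Finset.univ) (w := ![m0, m1, m2])
      (z := ![p, q, r]) (by simp [Fin.forall_fin_succ, h0, h1, h2])
      (by simp [Fin.sum_univ_three, hm]) (by simp [Fin.forall_fin_succ, hmem])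
    simpa [Fin.sum_univ_three] using this

lemma exists_forall_mul_le_mul {ι : Type*} [Fintype ι] {m μ : ι → ℝ} (hm : ∀ i, 0 ≤ m i)
    (hμ : ∀ i, 0 ≤ μ i) (hpos : ∃ i, 0 < m i) : ∃ i, 0 < m i ∧ ∀ j, μ i * m j ≤ μ j * m i := by
  obtain ⟨i, hi, hmin⟩ := (Finset.univ.filter fun i => 0 < m i).exists_min_image
    (fun i => μ i / m i) (by simpa [Finset.Nonempty] using hpos)
  simp only [Finset.mem_filter, Finset.mem_univ, true_and] at hi hmin
  refine ⟨i, hi, fun j => ?_⟩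
  rcases (hm j).eq_or_lt with hj | hj
  · rw [← hj, mul_zero]
    exact mul_nonneg (hμ j) hi.le
  · exact (div_le_div_iff₀ hi hj).1 (hmin j hj)

lemma mem_convexHull_stellar_piece {P0 P1 P2 Z x : E} {m0 m1 m2 μ0 μ1 μ2 : ℝ}
    (hm : m0 + m1 + m2 = 1) (hZ : Z = m0 • P0 + m1 • P1 + m2 • P2) (hμ0 : 0 ≤ μ0)
    (hμ : μ0 + μ1 + μ2 = 1) (hx : x = μ0 • P0 + μ1 • P1 + μ2 • P2) (hpos : 0 < m0)
    (h1 : μ0 * m1 ≤ μ1 * m0) (h2 : μ0 * m2 ≤ μ2 * m0) : x ∈ convexHull ℝ {P1, P2, Z} := by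
  obtain ⟨t, ht⟩ : ∃ t, t * m0 = μ0 := ⟨μ0 / m0, div_mul_cancel₀ _ hpos.ne'⟩
  have hle : ∀ {m μ : ℝ}, μ0 * m ≤ μ * m0 → 0 ≤ μ - t * m := fun h =>
    sub_nonneg.2 (le_of_mul_le_mul_right (by rw [mul_right_comm, ht]; exact h) hpos)
  refine mem_convexHull_triple_iff.2 ⟨μ1 - t * m1, μ2 - t * m2, t, hle h1, hle h2,
    nonneg_of_mul_nonneg_left (ht ▸ hμ0) hpos, by linear_combination ht - t * hm + hμ, ?_⟩
  rw [hx, hZ]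
  match_scalars
  · linear_combination -ht
  · ring
  · ring

lemma mem_stellar_of_mem_convexHull_triple {P0 P1 P2 Z x : E} {m0 m1 m2 : ℝ} (h0 : 0 ≤ m0)
    (h1 : 0 ≤ m1) (h2 : 0 ≤ m2) (hm : m0 + m1 + m2 = 1) (hZ : Z = m0 • P0 + m1 • P1 + m2 • P2)
    (hx : x ∈ convexHull ℝ {P0, P1, P2}) :
    (0 < m0 ∧ x ∈ convexHull ℝ {P1, P2, Z}) ∨ (0 < m1 ∧ x ∈ convexHull ℝ {P2, P0, Z}) ∨
      (0 < m2 ∧ x ∈ convexHull ℝ {P0, P1, Z}) := by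
  obtain ⟨μ0, μ1, μ2, hμ0, hμ1, hμ2, hμ, hx⟩ := mem_convexHull_triple_iff.1 hx
  -- the piece opposite to the vertex minimising `μᵢ / mᵢ` contains `x`
  obtain ⟨i, hi, hle⟩ := exists_forall_mul_le_mul (m := ![m0, m1, m2]) (μ := ![μ0, μ1, μ2])
    (by simp [Fin.forall_fin_succ, h0, h1, h2]) (by simp [Fin.forall_fin_succ, hμ0, hμ1, hμ2])
    (by
      by_contra! h
      linarith [show m0 ≤ 0 from h 0, show m1 ≤ 0 from h 1, show m2 ≤ 0 from h 2])
  simp only [Fin.forall_fin_succ] at hle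
  fin_cases i <;> simp at hi hle
  · exact Or.inl ⟨hi, mem_convexHull_stellar_piece hm hZ hμ0 hμ hx hi hle.1 hle.2⟩
  · refine Or.inr (Or.inl ⟨hi, mem_convexHull_stellar_piece (P0 := P1) (P1 := P2) (P2 := P0)
      (m0 := m1) (m1 := m2) (m2 := m0) (μ0 := μ1) (μ1 := μ2) (μ2 := μ0)
      (by linear_combination hm) (by rw [hZ]; abel) hμ1 (by linear_combination hμ)
      (by rw [hx]; abel) hi hle.2 hle.1⟩)
  · refine Or.inr (Or.inr ⟨hi, mem_convexHull_stellar_piece (P0 := P2) (P1 := P0) (P2 := P1)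
      (m0 := m2) (m1 := m0) (m2 := m1) (μ0 := μ2) (μ1 := μ0) (μ2 := μ1)
      (by linear_combination hm) (by rw [hZ]; abel) hμ2 (by linear_combination hμ)
      (by rw [hx]; abel) hi hle.1 hle.2⟩)

/-- The pieces with `mᵢ = 0` are degenerate and are left out. -/
lemma convexHull_triple_eq_stellar {P0 P1 P2 Z : E} {m0 m1 m2 : ℝ} (h0 : 0 ≤ m0)
    (h1 : 0 ≤ m1) (h2 : 0 ≤ m2) (hm : m0 + m1 + m2 = 1) (hZ : Z = m0 • P0 + m1 • P1 + m2 • P2) :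
    convexHull ℝ {P0, P1, P2} =
      ((if m0 = 0 then ∅ else convexHull ℝ {P1, P2, Z}) ∪
        (if m1 = 0 then ∅ else convexHull ℝ {P2, P0, Z})) ∪
        (if m2 = 0 then ∅ else convexHull ℝ {P0, P1, Z}) := by
  set T := convexHull ℝ {P0, P1, P2}
  have hZT : Z ∈ T := mem_convexHull_triple_iff.2 ⟨m0, m1, m2, h0, h1, h2, hm, hZ⟩
  have hsub : ∀ (c : Prop) [Decidable c] {A B : E}, A ∈ T → B ∈ T →
      (if c then ∅ else convexHull ℝ {A, B, Z}) ⊆ T := by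
    intro c _ A B hA hB
    split_ifs
    · exact empty_subset T
    · exact convexHull_min (by simp [insert_subset_iff, hA, hB, hZT]) (convex_convexHull ℝ _)
  have hP : ∀ {P}, P ∈ ({P0, P1, P2} : Set E) → P ∈ T := fun h => subset_convexHull ℝ _ h
  refine subset_antisymm (fun x hx => ?_) (union_subset (union_subset
    (hsub _ (hP (by simp)) (hP (by simp))) (hsub _ (hP (by simp)) (hP (by simp))))
    (hsub _ (hP (by simp)) (hP (by simp))))
  rcases mem_stellar_of_mem_convexHull_triple h0 h1 h2 hm hZ hx with
    ⟨hpos, hx⟩ | ⟨hpos, hx⟩ | ⟨hpos, hx⟩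
  · exact Or.inl (Or.inl (by rwa [if_neg hpos.ne']))
  · exact Or.inl (Or.inr (by rwa [if_neg hpos.ne']))
  · exact Or.inr (by rwa [if_neg hpos.ne'])

lemma mem_convexHull_of_mem_convexHull_insert (f : E →ᵃ[ℝ] ℝ) {v x : E} {W : Set E}
    (hW : W.Nonempty) (hv : 0 < f v)
    (hzero : ∀ y ∈ convexHull ℝ (insert v W), f y = 0 → y ∈ convexHull ℝ W)
    (hx : x ∈ convexHull ℝ (insert v W)) (hfx : f x ≤ 0) : x ∈ convexHull ℝ W := by
  have hx' := hx
  rw [convexHull_insert hW, mem_convexJoin] at hx'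
  obtain ⟨u, hu, y, hy, hxy⟩ := hx'
  rw [mem_singleton_iff.1 hu] at hxy
  obtain ⟨s, t, hs, ht, hst, rfl⟩ := hxy
  have hf : ∀ α β : ℝ, α + β = 1 → f (α • v + β • y) = α * f v + β * f y :=
    fun α β h => Convex.combo_affine_apply h
  rcases le_or_gt 0 (f y) with hy0 | hy0
  · exact hzero _ hx (le_antisymm hfx (by rw [hf s t hst]; positivity))
  -- `w` is where the segment from `v` to `y` crosses the hyperplane `f = 0`
  set l := f y / (f y - f v)
  have hl0 : 0 < l := div_pos_of_neg_of_neg hy0 (by linarith)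
  have hl1 : l < 1 := (div_lt_one_of_neg (by linarith)).2 (by linarith)
  set w := l • v + (1 - l) • y
  have hw : w ∈ convexHull ℝ W := by
    refine hzero w ((convex_convexHull ℝ _) (subset_convexHull ℝ _ (mem_insert v W))
      (convexHull_mono (subset_insert v W) hy) hl0.le (by linarith) (by ring)) ?_
    rw [hf l (1 - l) (by ring)]
    simp only [l]
    field_simp [show f y - f v ≠ 0 by linarith]
    ring
  have hsl : s ≤ l := by
    rw [hf s t hst] at hfx
    rw [le_div_iff_of_neg (by linarith)]
    nlinarith
  convert (convex_convexHull ℝ W) hw hy (div_nonneg hs hl0.le)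
    (by rw [sub_nonneg, div_le_one hl0]; exact hsl) (add_sub_cancel _ 1) using 1
  rw [eq_sub_of_add_eq' hst]
  simp only [w]
  match_scalars <;> field_simp
  ring

end ConvexCombination

section Plane

def det3Affine (p q : ℝ × ℝ) : (ℝ × ℝ) →ᵃ[ℝ] ℝ where
  toFun := det3 p q
  linear := (q - p).1 • LinearMap.snd ℝ ℝ ℝ - (q - p).2 • LinearMap.fst ℝ ℝ ℝ
  map_vadd' x v := by
    simp only [det3, cross, vadd_eq_add, LinearMap.sub_apply, LinearMap.smul_apply,
      LinearMap.snd_apply, LinearMap.fst_apply, Prod.fst_sub, Prod.snd_sub, Prod.fst_add,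
      Prod.snd_add, smul_eq_mul]
    ring

lemma det3_nonneg_of_mem_convexHull {p q x : ℝ × ℝ} {s : Set (ℝ × ℝ)}
    (hs : ∀ y ∈ s, 0 ≤ det3 p q y) (hx : x ∈ convexHull ℝ s) : 0 ≤ det3 p q x :=
  convexHull_min (t := det3Affine p q ⁻¹' Ici 0) hs ((convex_Ici 0).affine_preimage _) hx

lemma det3_nonpos_of_mem_convexHull {p q x : ℝ × ℝ} {s : Set (ℝ × ℝ)}
    (hs : ∀ y ∈ s, det3 p q y ≤ 0) (hx : x ∈ convexHull ℝ s) : det3 p q x ≤ 0 :=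
  convexHull_min (t := det3Affine p q ⁻¹' Iic 0) hs ((convex_Iic 0).affine_preimage _) hx

lemma continuous_det3 (p q : ℝ × ℝ) : Continuous (det3 p q) := by
  unfold det3 cross
  fun_prop

lemma isOpenMap_det3 {p q : ℝ × ℝ} (hpq : p ≠ q) : IsOpenMap (det3 p q) := by
  have hu : (q - p).1 ^ 2 + (q - p).2 ^ 2 ≠ 0 := by
    intro h
    have h1 : (q - p).1 = 0 := by nlinarith [sq_nonneg (q - p).1, sq_nonneg (q - p).2]
    have h2 : (q - p).2 = 0 := by nlinarith [sq_nonneg (q - p).1, sq_nonneg (q - p).2]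
    exact sub_ne_zero.2 hpq.symm (Prod.ext h1 h2)
  -- along the normal `(-(q - p).2, (q - p).1)` of the line `p q`, `det3 p q` grows linearly
  refine IsOpenMap.of_sections fun x => ⟨fun y => x +
    ((y - det3 p q x) / ((q - p).1 ^ 2 + (q - p).2 ^ 2)) • ((-(q - p).2, (q - p).1) : ℝ × ℝ),
    by fun_prop, by simp, fun y => ?_⟩
  simp only [det3, cross, Prod.fst_add, Prod.snd_add, Prod.fst_sub, Prod.snd_sub,
    Prod.smul_fst, Prod.smul_snd, smul_eq_mul] at hu ⊢
  field_simp
  ring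

lemma _root_.IsOpenMap.disjoint_interior {X : Type*} [TopologicalSpace X] {f : X → ℝ}
    (hf : IsOpenMap f) {A B : Set X} {c : ℝ} (hA : ∀ x ∈ A, f x ≤ c) (hB : ∀ x ∈ B, c ≤ f x) :
    Disjoint (interior A) (interior B) := by
  rw [Set.disjoint_left]
  intro x hxA hxB
  have h1 : f x ∈ interior (Iic c) := interior_mono (image_subset_iff.2 (show A ⊆ f ⁻¹' Iic c
    from hA)) (hf.image_interior_subset A (mem_image_of_mem f hxA))
  have h2 : f x ∈ interior (Ici c) := interior_mono (image_subset_iff.2 (show B ⊆ f ⁻¹' Ici c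
    from hB)) (hf.image_interior_subset B (mem_image_of_mem f hxB))
  rw [interior_Iic] at h1
  rw [interior_Ici] at h2
  exact lt_asymm (mem_Iio.1 h1) (mem_Ioi.1 h2)

lemma exists_det3_ne_zero_of_interior_nonempty {S : Set (ℝ × ℝ)}
    (hS : (interior (convexHull ℝ S)).Nonempty) {p q : ℝ × ℝ} (hpq : p ≠ q) :
    ∃ r ∈ S, det3 p q r ≠ 0 := by
  by_contra! h
  have hC : ∀ x ∈ convexHull ℝ S, det3 p q x = 0 := fun x hx =>
    le_antisymm (det3_nonpos_of_mem_convexHull (fun r hr => (h r hr).le) hx)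
      (det3_nonneg_of_mem_convexHull (fun r hr => (h r hr).ge) hx)
  have := (isOpenMap_det3 hpq).disjoint_interior (fun x hx => (hC x hx).le)
    (fun x hx => (hC x hx).ge)
  rw [disjoint_self, bot_eq_empty] at this
  exact hS.ne_empty this

lemma exists_det3_ne_zero {S : Set (ℝ × ℝ)} (hS : (interior (convexHull ℝ S)).Nonempty) :
    ∃ p ∈ S, ∃ q ∈ S, ∃ r ∈ S, det3 p q r ≠ 0 := by
  obtain ⟨p, hp⟩ := convexHull_nonempty_iff.1 (hS.mono interior_subset)
  obtain ⟨q, hq, hpq⟩ : ∃ q ∈ S, p ≠ q := by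
    by_contra! h
    have hsub : convexHull ℝ S ⊆ {p} :=
      convexHull_min (fun q hq => (h q hq).symm) (convex_singleton p)
    exact hS.ne_empty (subset_empty_iff.1 ((interior_mono hsub).trans (interior_singleton p).le))
  obtain ⟨r, hr, hpqr⟩ := exists_det3_ne_zero_of_interior_nonempty hS hpq
  exact ⟨p, hp, q, hq, r, hr, hpqr⟩

lemma eq_combination_of_det3_ne_zero {p q r : ℝ × ℝ} (hD : det3 p q r ≠ 0) (x : ℝ × ℝ) :
    x = (det3 q r x / det3 p q r) • p + (det3 r p x / det3 p q r) • q +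
      (det3 p q x / det3 p q r) • r := by
  simp only [div_eq_inv_mul, mul_smul, ← smul_add]
  rw [← det3_smul_eq, inv_smul_smul₀ hD]

lemma mem_convexHull_triple_of_det3_nonneg {p q r x : ℝ × ℝ} (hD : 0 < det3 p q r)
    (h0 : 0 ≤ det3 q r x) (h1 : 0 ≤ det3 r p x) (h2 : 0 ≤ det3 p q x) :
    x ∈ convexHull ℝ {p, q, r} :=
  mem_convexHull_triple_iff.2 ⟨_, _, _, div_nonneg h0 hD.le, div_nonneg h1 hD.le,
    div_nonneg h2 hD.le, by rw [← add_div, ← add_div, det3_add_det3_add_det3, div_self hD.ne'],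
    eq_combination_of_det3_ne_zero hD.ne' x⟩

lemma mem_segment_of_det3_eq_zero {p q r x : ℝ × ℝ} (hD : 0 < det3 p q r)
    (h0 : det3 q r x = 0) (h1 : 0 ≤ det3 r p x) (h2 : 0 ≤ det3 p q x) : x ∈ segment ℝ q r := by
  have hx := eq_combination_of_det3_ne_zero hD.ne' x
  rw [h0, zero_div, zero_smul, zero_add] at hx
  refine ⟨_, _, div_nonneg h1 hD.le, div_nonneg h2 hD.le, ?_, hx.symm⟩
  rw [← add_div, div_eq_one_iff_eq hD.ne', ← det3_add_det3_add_det3 p q r x, h0, zero_add]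

lemma interior_convexHull_triple_nonempty {p q r : ℝ × ℝ} (hD : 0 < det3 p q r) :
    (interior (convexHull ℝ {p, q, r})).Nonempty := by
  set U := {x | 0 < det3 q r x} ∩ {x | 0 < det3 r p x} ∩ {x | 0 < det3 p q x}
  have hU : IsOpen U :=
    ((isOpen_lt continuous_const (continuous_det3 q r)).inter
      (isOpen_lt continuous_const (continuous_det3 r p))).inter
      (isOpen_lt continuous_const (continuous_det3 p q))
  have hUsub : U ⊆ convexHull ℝ {p, q, r} := fun x ⟨⟨h0, h1⟩, h2⟩ =>
    mem_convexHull_triple_of_det3_nonneg hD h0.le h1.le h2.le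
  obtain ⟨h0, h1, h2⟩ := det3_of_eq_combination (p := p) (q := q) (r := r)
    (x := (1 / 3 : ℝ) • p + (1 / 3 : ℝ) • q + (1 / 3 : ℝ) • r) (by norm_num) rfl
  refine ⟨(1 / 3 : ℝ) • p + (1 / 3 : ℝ) • q + (1 / 3 : ℝ) • r,
    interior_maximal hUsub hU ⟨⟨?_, ?_⟩, ?_⟩⟩ <;>
  simp only [mem_ofPred_eq, h0, h1, h2] <;> positivity

lemma ne_of_eq_combination {P0 P1 P2 Z : ℝ × ℝ} {m0 m1 m2 : ℝ} (hD : det3 P0 P1 P2 ≠ 0)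
    (hm : m0 + m1 + m2 = 1) (hZ : Z = m0 • P0 + m1 • P1 + m2 • P2) (h0 : m0 < 1) (h1 : m1 < 1)
    (h2 : m2 < 1) : Z ≠ P0 ∧ Z ≠ P1 ∧ Z ≠ P2 := by
  obtain ⟨hd0, hd1, hd2⟩ := det3_of_eq_combination hm hZ
  have key : ∀ {m : ℝ}, m < 1 → det3 P0 P1 P2 ≠ m * det3 P0 P1 P2 := fun {m} hm1 h =>
    hD ((mul_eq_zero.1 (show (1 - m) * det3 P0 P1 P2 = 0 by linear_combination h)).resolve_left
      (by linarith))
  refine ⟨?_, ?_, ?_⟩ <;> rintro rfl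
  · exact key h0 (by rwa [det3_rotate] at hd0)
  · exact key h1 (by rwa [← det3_rotate] at hd1)
  · exact key h2 hd2

lemma disjoint_interior_of_det3_mul_nonpos {P Q R Z : ℝ × ℝ} (hRZ : R ≠ Z)
    (h : det3 R Z P * det3 R Z Q ≤ 0) :
    Disjoint (interior (convexHull ℝ {P, R, Z})) (interior (convexHull ℝ {R, Q, Z})) := by
  have hf := isOpenMap_det3 hRZ
  rcases mul_nonpos_iff.1 h with ⟨hP, hQ⟩ | ⟨hP, hQ⟩
  · exact (hf.disjoint_interior (c := 0)
      (fun x => det3_nonpos_of_mem_convexHull (by simp [hQ]))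
      (fun x => det3_nonneg_of_mem_convexHull (by simp [hP]))).symm
  · exact hf.disjoint_interior (c := 0)
      (fun x => det3_nonpos_of_mem_convexHull (by simp [hP]))
      (fun x => det3_nonneg_of_mem_convexHull (by simp [hQ]))

lemma disjoint_interior_stellar {P0 P1 P2 Z : ℝ × ℝ} {m0 m1 m2 : ℝ} (h0 : 0 ≤ m0)
    (h1 : 0 ≤ m1) (hm : m0 + m1 + m2 = 1) (hZ : Z = m0 • P0 + m1 • P1 + m2 • P2) (hZ2 : P2 ≠ Z) :
    Disjoint (interior (convexHull ℝ {P1, P2, Z})) (interior (convexHull ℝ {P2, P0, Z})) := by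
  obtain ⟨hd0, hd1, -⟩ := det3_of_eq_combination hm hZ
  refine disjoint_interior_of_det3_mul_nonpos hZ2 ?_
  rw [det3_rotate P1 P2 Z, det3_swap P2 P0 Z, hd0, hd1]
  nlinarith [mul_nonneg (mul_nonneg h0 h1) (sq_nonneg (det3 P0 P1 P2))]

lemma convexHull_insert_eq_union_of_cone {v a b : ℝ × ℝ} {W : Set (ℝ × ℝ)} (ha : a ∈ W)
    (hb : b ∈ W) (hD : 0 < det3 v a b) (hcone : ∀ p ∈ W, 0 ≤ det3 v a p ∧ 0 ≤ det3 b v p) :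
    convexHull ℝ (insert v W) = convexHull ℝ W ∪ convexHull ℝ {v, a, b} := by
  have hC : ∀ x ∈ convexHull ℝ (insert v W), 0 ≤ det3 v a x ∧ 0 ≤ det3 b v x := fun x hx =>
    ⟨det3_nonneg_of_mem_convexHull (by simpa using fun p hp => (hcone p hp).1) hx,
      det3_nonneg_of_mem_convexHull (by simpa using fun p hp => (hcone p hp).2) hx⟩
  refine subset_antisymm (fun x hx => ?_) (union_subset (convexHull_mono (subset_insert v W))
    (convexHull_mono (insert_subset_insert (by simp [insert_subset_iff, ha, hb]))))
  rcases le_total 0 (det3 a b x) with h | h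
  · exact Or.inr (mem_convexHull_triple_of_det3_nonneg hD h (hC x hx).2 (hC x hx).1)
  · refine Or.inl (mem_convexHull_of_mem_convexHull_insert (det3Affine a b) ⟨a, ha⟩ ?_
      (fun y hy hy0 => segment_subset_convexHull ha hb
        (mem_segment_of_det3_eq_zero hD hy0 (hC y hy).2 (hC y hy).1)) hx h)
    show 0 < det3 a b v
    rwa [det3_rotate]

end Plane

def latticeTriangle (a b c : ℤ × ℤ) : Set (ℝ × ℝ) := convexHull ℝ {emb a, emb b, emb c}

structure IsBasicTriangulation (S : Set (ℝ × ℝ)) (L : List (Fin 3 → ℤ × ℤ)) : Prop where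
  isUnit_det3 : ∀ t ∈ L, IsUnit (det3 (t 0) (t 1) (t 2))
  biUnion_eq : ⋃ t ∈ L, latticeTriangle (t 0) (t 1) (t 2) = S
  pairwise_disjoint : L.Pairwise fun t s =>
    Disjoint (interior (latticeTriangle (t 0) (t 1) (t 2)))
      (interior (latticeTriangle (s 0) (s 1) (s 2)))

namespace IsBasicTriangulation

variable {S S' : Set (ℝ × ℝ)} {L L' : List (Fin 3 → ℤ × ℤ)}

lemma nil : IsBasicTriangulation ∅ [] := ⟨by simp, by simp, List.Pairwise.nil⟩

lemma singleton {a b c : ℤ × ℤ} (h : IsUnit (det3 a b c)) :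
    IsBasicTriangulation (latticeTriangle a b c) [![a, b, c]] :=
  ⟨by simpa using h, by simp, List.pairwise_singleton _ _⟩

lemma subset (h : IsBasicTriangulation S L) {t : Fin 3 → ℤ × ℤ} (ht : t ∈ L) :
    latticeTriangle (t 0) (t 1) (t 2) ⊆ S := by
  rw [← h.biUnion_eq]
  exact fun x hx => mem_iUnion₂.2 ⟨t, ht, hx⟩

lemma append (h : IsBasicTriangulation S L) (h' : IsBasicTriangulation S' L')
    (hdisj : ∀ t ∈ L, ∀ s ∈ L', Disjoint (interior (latticeTriangle (t 0) (t 1) (t 2)))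
      (interior (latticeTriangle (s 0) (s 1) (s 2)))) :
    IsBasicTriangulation (S ∪ S') (L ++ L') where
  isUnit_det3 t ht := (List.mem_append.1 ht).elim (h.isUnit_det3 t) (h'.isUnit_det3 t)
  biUnion_eq := by
    simp only [List.mem_append, iUnion_or, iUnion_union_distrib, h.biUnion_eq, h'.biUnion_eq]
  pairwise_disjoint := List.pairwise_append.2 ⟨h.pairwise_disjoint, h'.pairwise_disjoint, hdisj⟩

lemma disjoint_interior (h : IsBasicTriangulation S L) (h' : IsBasicTriangulation S' L')
    (hdisj : Disjoint (interior S) (interior S')) :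
    ∀ t ∈ L, ∀ s ∈ L', Disjoint (interior (latticeTriangle (t 0) (t 1) (t 2)))
      (interior (latticeTriangle (s 0) (s 1) (s 2))) := fun _ ht _ hs =>
  hdisj.mono (interior_mono (h.subset ht)) (interior_mono (h'.subset hs))

lemma stellar {a b c z : ℤ × ℤ} {m0 m1 m2 : ℝ} {L0 L1 L2 : List (Fin 3 → ℤ × ℤ)}
    (hD : det3 a b c ≠ 0) (h0 : 0 ≤ m0) (h1 : 0 ≤ m1) (h2 : 0 ≤ m2) (h0' : m0 < 1)
    (h1' : m1 < 1) (h2' : m2 < 1) (hm : m0 + m1 + m2 = 1)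
    (hz : emb z = m0 • emb a + m1 • emb b + m2 • emb c)
    (hL0 : IsBasicTriangulation (if m0 = 0 then ∅ else latticeTriangle b c z) L0)
    (hL1 : IsBasicTriangulation (if m1 = 0 then ∅ else latticeTriangle c a z) L1)
    (hL2 : IsBasicTriangulation (if m2 = 0 then ∅ else latticeTriangle a b z) L2) :
    IsBasicTriangulation (latticeTriangle a b c) (L0 ++ L1 ++ L2) := by
  obtain ⟨hza, hzb, hzc⟩ :=
    ne_of_eq_combination (by rwa [det3_emb, Int.cast_ne_zero]) hm hz h0' h1' h2'
  have hsub : ∀ (c : Prop) [Decidable c] (A : Set (ℝ × ℝ)),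
      interior (if c then ∅ else A) ⊆ interior A := fun c _ A =>
    interior_mono (by split_ifs <;> simp)
  have h01 := (disjoint_interior_stellar h0 h1 hm hz hzc.symm).mono (hsub (m0 = 0) _)
    (hsub (m1 = 0) _)
  have h12 := (disjoint_interior_stellar (P0 := emb b) (P1 := emb c) (P2 := emb a)
    (m0 := m1) (m1 := m2) (m2 := m0) h1 h2 (by linear_combination hm) (by rw [hz]; abel)
    hza.symm).mono (hsub (m1 = 0) _) (hsub (m2 = 0) _)
  have h20 := (disjoint_interior_stellar (P0 := emb c) (P1 := emb a) (P2 := emb b)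
    (m0 := m2) (m1 := m0) (m2 := m1) h2 h0 (by linear_combination hm) (by rw [hz]; abel)
    hzb.symm).mono (hsub (m2 = 0) _) (hsub (m0 = 0) _)
  rw [latticeTriangle, convexHull_triple_eq_stellar h0 h1 h2 hm hz]
  refine (hL0.append hL1 (hL0.disjoint_interior hL1 h01)).append hL2 fun t ht s hs => ?_
  rcases List.mem_append.1 ht with ht | ht
  · exact (hL2.disjoint_interior hL0 h20 s hs t ht).symm
  · exact hL1.disjoint_interior hL2 h12 t ht s hs

lemma exists_fin {S : Set (ℝ × ℝ)} {L : List (Fin 3 → ℤ × ℤ)} (h : IsBasicTriangulation S L) :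
    ∃ (m : ℕ) (t : Fin m → Fin 3 → ℤ × ℤ),
      (∀ i, det3 (t i 0) (t i 1) (t i 2) = 1 ∨ det3 (t i 0) (t i 1) (t i 2) = -1) ∧
      (⋃ i, convexHull ℝ (emb '' range (t i))) = S ∧
      ∀ i j, i ≠ j → interior (convexHull ℝ (emb '' range (t i))) ∩
        interior (convexHull ℝ (emb '' range (t j))) = ∅ := by
  have hT (t : Fin 3 → ℤ × ℤ) :
      convexHull ℝ (emb '' range t) = latticeTriangle (t 0) (t 1) (t 2) := by
    have : range t = {t 0, t 1, t 2} := by ext x; simp [Fin.exists_fin_succ, eq_comm]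
    simp [this, latticeTriangle, image_insert_eq]
  refine ⟨L.length, L.get, fun i => Int.isUnit_iff.1 (h.isUnit_det3 _ (List.get_mem L i)), ?_,
    fun i j hij => ?_⟩
  · simp only [hT, ← h.biUnion_eq]
    ext x
    simp only [mem_iUnion]
    constructor
    · rintro ⟨i, hx⟩
      exact ⟨L.get i, List.get_mem L i, hx⟩
    · rintro ⟨t, ht, hx⟩
      obtain ⟨i, rfl⟩ := List.get_of_mem ht
      exact ⟨i, hx⟩
  · simp only [hT, ← disjoint_iff_inter_eq_empty]
    rcases lt_or_gt_of_ne hij with hlt | hlt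
    · exact List.pairwise_iff_get.1 h.pairwise_disjoint i j hlt
    · exact (List.pairwise_iff_get.1 h.pairwise_disjoint j i hlt).symm

end IsBasicTriangulation

lemma natAbs_lt_natAbs_of_cast_eq_mul {d d' : ℤ} {m : ℝ} (hd : d ≠ 0) (h0 : 0 ≤ m) (h1 : m < 1)
    (h : (d' : ℝ) = m * d) : d'.natAbs < d.natAbs := by
  have : |(d' : ℝ)| < |(d : ℝ)| := by
    rw [h, abs_mul, abs_of_nonneg h0]
    exact mul_lt_of_lt_one_left (abs_pos.2 (by exact_mod_cast hd)) h1
  zify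
  exact_mod_cast this

theorem exists_isBasicTriangulation_latticeTriangle {a b c : ℤ × ℤ} (h : det3 a b c ≠ 0) :
    ∃ L, IsBasicTriangulation (latticeTriangle a b c) L := by
  induction hn : (det3 a b c).natAbs using Nat.strong_induction_on generalizing a b c with
  | _ n ih =>
  by_cases hu : IsUnit (det3 a b c)
  · exact ⟨_, .singleton hu⟩
  obtain ⟨z, m0, m1, m2, h0, h0', h1, h1', h2, h2', hm, hz⟩ :=
    exists_barycentric_lattice_point h hu
  obtain ⟨hd0, hd1, hd2⟩ := det3_of_eq_combination hm hz
  simp only [det3_emb] at hd0 hd1 hd2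
  have piece : ∀ {p q r : ℤ × ℤ} {m : ℝ}, 0 ≤ m → m < 1 →
      ((det3 p q r : ℤ) : ℝ) = m * det3 a b c →
      ∃ L, IsBasicTriangulation (if m = 0 then ∅ else latticeTriangle p q r) L := by
    intro p q r m hm0 hm1 hpqr
    split_ifs with hm
    · exact ⟨[], .nil⟩
    · have hne : det3 p q r ≠ 0 := by
        exact_mod_cast hpqr.trans_ne (mul_ne_zero hm (by exact_mod_cast h))
      exact ih _ (hn ▸ natAbs_lt_natAbs_of_cast_eq_mul h hm0 hm1 hpqr) hne rfl
  obtain ⟨L0, hL0⟩ := piece h0 h0' hd0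
  obtain ⟨L1, hL1⟩ := piece h1 h1' hd1
  obtain ⟨L2, hL2⟩ := piece h2 h2' hd2
  exact ⟨_, .stellar h h0 h1 h2 h0' h1' h2' hm hz hL0 hL1 hL2⟩

theorem isUnit_det3_of_setOf_mem_latticeTriangle {v0 v1 v2 : ℤ × ℤ} (hD : det3 v0 v1 v2 ≠ 0)
    (h : {z | emb z ∈ latticeTriangle v0 v1 v2} = {v0, v1, v2}) : IsUnit (det3 v0 v1 v2) := by
  by_contra hu
  obtain ⟨z, m0, m1, m2, h0, h0', h1, h1', h2, h2', hm, hz⟩ :=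
    exists_barycentric_lattice_point hD hu
  obtain ⟨hz0, hz1, hz2⟩ :=
    ne_of_eq_combination (by rwa [det3_emb, Int.cast_ne_zero]) hm hz h0' h1' h2'
  have hmem : z ∈ {z | emb z ∈ latticeTriangle v0 v1 v2} :=
    mem_convexHull_triple_iff.2 ⟨m0, m1, m2, h0, h1, h2, hm, hz⟩
  rw [h] at hmem
  rcases hmem with rfl | rfl | rfl
  exacts [hz0 rfl, hz1 rfl, hz2 rfl]

section Polygon

def slope (d : ℤ × ℤ) : WithTop ℚ := if d.1 = 0 then ⊤ else ((d.2 / d.1 : ℚ) : WithTop ℚ)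

lemma slope_le_slope_iff {d e : ℤ × ℤ} (hd : toLex 0 < toLex d) (he : toLex 0 < toLex e) :
    slope d ≤ slope e ↔ 0 ≤ cross d e := by
  rw [Prod.Lex.toLex_lt_toLex] at hd he
  simp only [Prod.fst_zero, Prod.snd_zero] at hd he
  unfold slope cross
  split_ifs with h1 h2 h2
  · simp [h1, h2]
  · have : 0 < d.2 := by omega
    have : 0 < e.1 := by omega
    simp only [top_le_iff, WithTop.coe_ne_top, false_iff, not_le, h1]
    nlinarith
  · have : 0 < e.2 := by omega
    have : 0 < d.1 := by omega
    simp only [le_top, true_iff, h2]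
    nlinarith
  · have hd1 : (0 : ℚ) < d.1 := by exact_mod_cast (show 0 < d.1 by omega)
    have he1 : (0 : ℚ) < e.1 := by exact_mod_cast (show 0 < e.1 by omega)
    rw [WithTop.coe_le_coe, div_le_div_iff₀ hd1 he1]
    norm_cast
    constructor <;> intro <;> linarith

lemma toLex_zero_lt_toLex_sub {v p : ℤ × ℤ} (h : toLex v ≤ toLex p) (hne : p ≠ v) :
    toLex 0 < toLex (p - v) := by
  have hne' : p.1 ≠ v.1 ∨ p.2 ≠ v.2 := by
    by_contra! h'
    exact hne (Prod.ext h'.1 h'.2)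
  rw [Prod.Lex.toLex_le_toLex] at h
  rw [Prod.Lex.toLex_lt_toLex]
  simp only [Prod.fst_zero, Prod.snd_zero, Prod.fst_sub, Prod.snd_sub]
  omega

lemma exists_cone_vertex {V : Finset (ℤ × ℤ)} (hV : 1 < V.card)
    (hline : ∀ p ∈ V, ∀ q ∈ V, p ≠ q → ∃ r ∈ V, det3 p q r ≠ 0) :
    ∃ v ∈ V, ∃ a ∈ V.erase v, ∃ b ∈ V.erase v, 0 < det3 v a b ∧
      ∀ p ∈ V, 0 ≤ det3 v a p ∧ 0 ≤ det3 b v p := by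
  obtain ⟨v, hv, hmin⟩ := V.exists_min_image toLex (Finset.card_pos.1 (by omega))
  have hW : (V.erase v).Nonempty :=
    Finset.card_pos.1 (by rw [Finset.card_erase_of_mem hv]; omega)
  have hup : ∀ p ∈ V.erase v, toLex 0 < toLex (p - v) := fun p hp =>
    toLex_zero_lt_toLex_sub (hmin p (Finset.mem_of_mem_erase hp)) (Finset.ne_of_mem_erase hp)
  obtain ⟨a, ha, hamin⟩ := (V.erase v).exists_min_image (fun p => slope (p - v)) hW
  obtain ⟨b, hb, hbmax⟩ := (V.erase v).exists_max_image (fun p => slope (p - v)) hW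
  have hcone : ∀ p ∈ V, 0 ≤ det3 v a p ∧ 0 ≤ det3 b v p := by
    intro p hp
    by_cases hpv : p = v
    · simp [hpv]
    have hp' := Finset.mem_erase.2 ⟨hpv, hp⟩
    refine ⟨(slope_le_slope_iff (hup a ha) (hup p hp')).1 (hamin p hp'), ?_⟩
    rw [← det3_rotate]
    exact (slope_le_slope_iff (hup p hp') (hup b hb)).1 (hbmax p hp')
  refine ⟨v, hv, a, ha, b, hb, (hcone b (Finset.mem_of_mem_erase hb)).1.lt_of_ne' fun hD => ?_,
    hcone⟩
  -- otherwise `a` and `b` point in the same direction from `v`, and `V` lies on the line `v a`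
  have hba : slope (b - v) ≤ slope (a - v) := by
    refine (slope_le_slope_iff (hup b hb) (hup a ha)).2 ?_
    show 0 ≤ det3 v b a
    rw [det3_swap, hD, neg_zero]
  obtain ⟨r, hr, hvar⟩ :=
    hline v hv a (Finset.mem_of_mem_erase ha) (Finset.ne_of_mem_erase ha).symm
  by_cases hrv : r = v
  · exact hvar (by simp [hrv])
  have hr' := Finset.mem_erase.2 ⟨hrv, hr⟩
  have h2 : 0 ≤ det3 v r a :=
    (slope_le_slope_iff (hup r hr') (hup a ha)).1 ((hbmax r hr').trans hba)
  rw [det3_swap] at h2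
  exact hvar (le_antisymm (by linarith) (hcone r hr).1)

lemma image_emb_eq_insert {V : Finset (ℤ × ℤ)} {v : ℤ × ℤ} (hv : v ∈ V) :
    emb '' ↑V = insert (emb v) (emb '' ↑(V.erase v)) := by
  rw [← image_insert_eq, ← Finset.coe_insert, Finset.insert_erase hv]

lemma det3_neg_of_notMem_convexHull_erase {V : Finset (ℤ × ℤ)} {v a b p : ℤ × ℤ} (hv : v ∈ V)
    (ha : a ∈ V) (hb : b ∈ V) (hD : 0 < det3 v a b) (hpa : 0 ≤ det3 v a p) (hpb : 0 ≤ det3 b v p)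
    (hpv : p ≠ v) (hpa' : p ≠ a) (hpb' : p ≠ b)
    (hext : emb p ∉ convexHull ℝ (emb '' ↑(V.erase p))) : det3 a b p < 0 := by
  by_contra! h
  have hmem : ∀ q ∈ V, q ≠ p → emb q ∈ emb '' ↑(V.erase p) := fun q hq hqp =>
    ⟨q, Finset.mem_erase.2 ⟨hqp, hq⟩, rfl⟩
  refine hext (convexHull_mono ?_ (mem_convexHull_triple_of_det3_nonneg (p := emb v)
    (q := emb a) (r := emb b) ?_ ?_ ?_ ?_))
  · simp only [insert_subset_iff, singleton_subset_iff]
    exact ⟨hmem v hv hpv.symm, hmem a ha hpa'.symm, hmem b hb hpb'.symm⟩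
  all_goals rw [det3_emb]; exact_mod_cast ‹_›

lemma interior_convexHull_erase_nonempty {V : Finset (ℤ × ℤ)} {v a b : ℤ × ℤ} (hV : 4 ≤ V.card)
    (hv : v ∈ V) (ha : a ∈ V.erase v) (hb : b ∈ V.erase v) (hD : 0 < det3 v a b)
    (hcone : ∀ p ∈ V, 0 ≤ det3 v a p ∧ 0 ≤ det3 b v p)
    (hext : ∀ p ∈ V, emb p ∉ convexHull ℝ (emb '' ↑(V.erase p))) :
    (interior (convexHull ℝ (emb '' ↑(V.erase v)))).Nonempty := by
  have := Finset.pred_card_le_card_erase (s := V) (a := v)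
  have := Finset.pred_card_le_card_erase (s := V.erase v) (a := a)
  obtain ⟨p, hp, hpb⟩ := Finset.exists_mem_ne (s := (V.erase v).erase a) (by omega) b
  obtain ⟨hpa, hp⟩ := Finset.mem_erase.1 hp
  obtain ⟨hpv, hpV⟩ := Finset.mem_erase.1 hp
  have h := det3_neg_of_notMem_convexHull_erase hv (Finset.mem_of_mem_erase ha)
    (Finset.mem_of_mem_erase hb) hD (hcone p hpV).1 (hcone p hpV).2 hpv hpa hpb (hext p hpV)
  refine (interior_convexHull_triple_nonempty (p := emb a) (q := emb p) (r := emb b) ?_).mono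
    (interior_mono (convexHull_mono ?_))
  · rw [det3_emb, det3_swap]
    exact_mod_cast neg_pos.2 h
  · simp only [insert_subset_iff, singleton_subset_iff]
    exact ⟨mem_image_of_mem emb ha, mem_image_of_mem emb hp, mem_image_of_mem emb hb⟩

lemma exists_isBasicTriangulation_of_ear {V : Finset (ℤ × ℤ)} {v a b : ℤ × ℤ} (hv : v ∈ V)
    (ha : a ∈ V.erase v) (hb : b ∈ V.erase v) (hD : 0 < det3 v a b)
    (hcone : ∀ p ∈ V, 0 ≤ det3 v a p ∧ 0 ≤ det3 b v p)
    (hext : ∀ p ∈ V, emb p ∉ convexHull ℝ (emb '' ↑(V.erase p))) {L : List (Fin 3 → ℤ × ℤ)}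
    (hL : IsBasicTriangulation (convexHull ℝ (emb '' ↑(V.erase v))) L) :
    ∃ L', IsBasicTriangulation (convexHull ℝ (emb '' ↑V)) L' := by
  obtain ⟨L', hL'⟩ := exists_isBasicTriangulation_latticeTriangle hD.ne'
  have hfar : ∀ y ∈ emb '' ↑(V.erase v), det3 (emb a) (emb b) y ≤ 0 := by
    rintro _ ⟨p, hp, rfl⟩
    obtain ⟨hpv, hpV⟩ := Finset.mem_erase.1 hp
    rw [det3_emb]
    by_cases hpa : p = a
    · simp [hpa]
    by_cases hpb : p = b
    · simp [hpb]
    exact_mod_cast (det3_neg_of_notMem_convexHull_erase hv (Finset.mem_of_mem_erase ha)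
      (Finset.mem_of_mem_erase hb) hD (hcone p hpV).1 (hcone p hpV).2 hpv hpa hpb
      (hext p hpV)).le
  have hab : emb a ≠ emb b := fun h => by simp [emb_injective h] at hD
  rw [image_emb_eq_insert hv, convexHull_insert_eq_union_of_cone (mem_image_of_mem emb ha)
    (mem_image_of_mem emb hb) (by rwa [det3_emb, Int.cast_pos])]
  · refine ⟨L ++ L', hL.append hL' (hL.disjoint_interior hL' ?_)⟩
    refine (isOpenMap_det3 hab).disjoint_interior (c := 0)
      (fun x => det3_nonpos_of_mem_convexHull hfar) (fun x => det3_nonneg_of_mem_convexHull ?_)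
    simp only [mem_insert_iff, mem_singleton_iff, forall_eq_or_imp, forall_eq, det3_self_mid,
      det3_self_right, le_refl, and_true, det3_emb]
    rw [det3_rotate]
    exact_mod_cast hD.le
  · rintro _ ⟨p, hp, rfl⟩
    simp only [det3_emb]
    exact_mod_cast hcone p (Finset.mem_of_mem_erase hp)

theorem exists_isBasicTriangulation (V : Finset (ℤ × ℤ))
    (hV : (interior (convexHull ℝ (emb '' ↑V))).Nonempty) :
    ∃ L, IsBasicTriangulation (convexHull ℝ (emb '' ↑V)) L := by
  induction V using Finset.strongInduction with
  | H V ih =>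
  by_cases hred : ∃ v ∈ V, emb v ∈ convexHull ℝ (emb '' ↑(V.erase v))
  · obtain ⟨v, hv, hmem⟩ := hred
    have heq : convexHull ℝ (emb '' ↑V) = convexHull ℝ (emb '' ↑(V.erase v)) := by
      rw [image_emb_eq_insert hv]
      exact subset_antisymm (convexHull_min (insert_subset hmem (subset_convexHull ℝ _))
        (convex_convexHull ℝ _)) (convexHull_mono (subset_insert _ _))
    rw [heq] at hV ⊢
    exact ih _ (Finset.erase_ssubset hv) hV
  push Not at hred
  obtain ⟨_, ⟨p, hp, rfl⟩, _, ⟨q, hq, rfl⟩, _, ⟨r, hr, rfl⟩, hpqr⟩ := exists_det3_ne_zero hV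
  rw [det3_emb, Int.cast_ne_zero] at hpqr
  have hsub : {p, q, r} ⊆ V := Finset.insert_subset_iff.2
    ⟨hp, Finset.insert_subset_iff.2 ⟨hq, Finset.singleton_subset_iff.2 hr⟩⟩
  have hcard : ({p, q, r} : Finset (ℤ × ℤ)).card = 3 := Finset.card_eq_three.2
    ⟨p, q, r, by rintro rfl; simp at hpqr, by rintro rfl; simp at hpqr,
      by rintro rfl; simp at hpqr, rfl⟩
  rcases (Finset.card_le_card hsub).eq_or_lt with h3 | h4
  · rw [← Finset.eq_of_subset_of_card_le hsub h3.ge]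
    simpa [latticeTriangle, image_insert_eq] using
      exists_isBasicTriangulation_latticeTriangle hpqr
  have hline : ∀ p ∈ V, ∀ q ∈ V, p ≠ q → ∃ r ∈ V, det3 p q r ≠ 0 := fun p _ q _ hpq => by
    obtain ⟨_, ⟨r, hr, rfl⟩, h⟩ :=
      exists_det3_ne_zero_of_interior_nonempty hV (emb_injective.ne hpq)
    exact ⟨r, hr, by rwa [det3_emb, Int.cast_ne_zero] at h⟩
  obtain ⟨v, hv, a, ha, b, hb, hD, hcone⟩ := exists_cone_vertex (by omega) hline
  obtain ⟨L, hL⟩ := ih _ (Finset.erase_ssubset hv)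
    (interior_convexHull_erase_nonempty (by omega) hv ha hb hD hcone hred)
  exact exists_isBasicTriangulation_of_ear hv ha hb hD hcone hred hL

end Polygon

end LatticeTriangulation

theorem stmt10 (V : Finset (ℤ × ℤ)) (P : Set (ℝ × ℝ))
    (hP : P = convexHull ℝ ((fun p : ℤ × ℤ => ((p.1 : ℝ), (p.2 : ℝ))) '' (V : Set (ℤ × ℤ))))
    (hdim : (interior P).Nonempty) :
    -- existence of a basic lattice triangulation of P:
    (∃ (m : ℕ) (t : Fin m → Fin 3 → ℤ × ℤ),
      (∀ i : Fin m,
        ((t i 1).1 - (t i 0).1) * ((t i 2).2 - (t i 0).2)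
          - ((t i 1).2 - (t i 0).2) * ((t i 2).1 - (t i 0).1) = 1 ∨
        ((t i 1).1 - (t i 0).1) * ((t i 2).2 - (t i 0).2)
          - ((t i 1).2 - (t i 0).2) * ((t i 2).1 - (t i 0).1) = -1) ∧
      (⋃ i : Fin m,
        convexHull ℝ ((fun p : ℤ × ℤ => ((p.1 : ℝ), (p.2 : ℝ))) '' Set.range (t i))) = P ∧
      (∀ i j : Fin m, i ≠ j →
        interior (convexHull ℝ ((fun p : ℤ × ℤ => ((p.1 : ℝ), (p.2 : ℝ))) '' Set.range (t i)))
        ∩ interior (convexHull ℝ ((fun p : ℤ × ℤ => ((p.1 : ℝ), (p.2 : ℝ))) '' Set.range (t j)))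
        = ∅)) ∧
    -- every maximal lattice triangle in dimension 2 is basic:
    (∀ v0 v1 v2 : ℤ × ℤ,
      (v1.1 - v0.1) * (v2.2 - v0.2) - (v1.2 - v0.2) * (v2.1 - v0.1) ≠ 0 →
      {z : ℤ × ℤ | ((z.1 : ℝ), (z.2 : ℝ)) ∈
        convexHull ℝ {((v0.1 : ℝ), (v0.2 : ℝ)), ((v1.1 : ℝ), (v1.2 : ℝ)),
          ((v2.1 : ℝ), (v2.2 : ℝ))}} = {v0, v1, v2} →
      ((v1.1 - v0.1) * (v2.2 - v0.2) - (v1.2 - v0.2) * (v2.1 - v0.1) = 1 ∨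
       (v1.1 - v0.1) * (v2.2 - v0.2) - (v1.2 - v0.2) * (v2.1 - v0.1) = -1)) := by
  subst hP
  refine ⟨?_, fun v0 v1 v2 hD h => Int.isUnit_iff.1
    (LatticeTriangulation.isUnit_det3_of_setOf_mem_latticeTriangle hD h)⟩
  obtain ⟨L, hL⟩ := LatticeTriangulation.exists_isBasicTriangulation V hdim
  exact hL.exists_fin
end
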